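/- (Contiguity: up shift with respect to e_{n+1}.) Fix k with 1 ≤ k ≤ n. Then at every point x with all coordinates positive, applying the operator S₂ = Σ_{i≠k} x_{1k}x_{2i}·∂/∂x_{1i} + x_{2k}·(Σ_{i≠k} x_{2i}·∂/∂x_{2i}) + α_k·x_{2k} to the function x ↦ ∂Φ(α, δ−1; x)/∂x_{1k} yields α_k·δ·Φ(α,δ;x) + α_k·[g(t,x)]_{t=a}^{t=b}. -/

import Mathlib

open Complex Function

/-- Partial derivative of `f` with respect to the coordinate `p`. -/
noncomputable def pd {n : ℕ} (p : Fin 2 × Fin n)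
    (f : ((Fin 2 × Fin n) → ℝ) → ℂ) (x : (Fin 2 × Fin n) → ℝ) : ℂ :=
  deriv (fun s : ℝ => f (Function.update x p s)) (x p)

/-- `Φ(α,δ;x) = ∫_a^b t^(−δ−1) ∏ₖ (x_{1k} + x_{2k} t)^{α_k} dt`; the first row
of `x` is indexed by `0 : Fin 2`, the second row by `1 : Fin 2`. -/
noncomputable def Phi {n : ℕ} (α : Fin n → ℂ) (δ : ℂ) (a b : ℝ)
    (x : (Fin 2 × Fin n) → ℝ) : ℂ :=
  ∫ t in a..b, (t : ℂ) ^ (-δ - 1)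
    * ∏ k, ((x (0, k) : ℂ) + (x (1, k) : ℂ) * (t : ℂ)) ^ (α k)

/-- `g(t,x) = t^(−δ) ∏ₖ (x_{1k} + x_{2k} t)^{α_k}`. -/
noncomputable def gfun {n : ℕ} (α : Fin n → ℂ) (δ : ℂ) (t : ℝ)
    (x : (Fin 2 × Fin n) → ℝ) : ℂ :=
  (t : ℂ) ^ (-δ) * ∏ k, ((x (0, k) : ℂ) + (x (1, k) : ℂ) * (t : ℂ)) ^ (α k)

/-!
Differentiating under the integral sign, `∂/∂x_{1i}` and `∂/∂x_{2i}` both lower `α_i` by one and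
multiply by `α_i`; the second one also multiplies the integrand by `t`, i.e. lowers `δ` by one.
For `i ≠ k` the two second-order terms of `S₂` therefore recombine through
`x_{1k} + x_{2k} t = L_k` into `α_k α_i x_{2i} Φ(α - e_i, δ - 1)`, and together with the
first-order term the result is `α_k ∫ t^{-δ} (d/dt) ∏ L_j^{α_j} dt`, where
`L_j = x_{1j} + x_{2j} t`. An integration by parts turns this into `α_k (δ Φ(α, δ) + [g]_a^b)`.
-/

open Set Filter Topology MeasureTheory Metric

theorem Finset.prod_apply_update {ι α M : Type*} [Fintype ι] [DecidableEq ι] [CommMonoid M]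
    (f : ι → α → M) (g : ι → α) (i : ι) (v : α) :
    ∏ j, f j (update g i v j) = f i v * ∏ j ∈ Finset.univ.erase i, f j (g j) := by
  simp_rw [apply_update f g i v]
  rw [Finset.prod_update_of_mem (Finset.mem_univ i), Finset.sdiff_singleton_eq_erase]

theorem update_pos {ι : Type*} [DecidableEq ι] {y : ι → ℝ} (hy : ∀ p, 0 < y p) (p : ι) {s : ℝ}
    (hs : 0 < s) (q : ι) : 0 < update y p s q := by
  rcases eq_or_ne q p with rfl | h
  · simpa using hs
  · simpa [update_of_ne h] using hy q

theorem intervalIntegral.hasDerivAt_integral_of_continuousOn {E : Type*}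
    [NormedAddCommGroup E] [NormedSpace ℝ E] {F F' : ℝ → ℝ → E} {x₀ ε a b : ℝ} (hε : 0 < ε)
    (hF : ContinuousOn (uncurry F) (closedBall x₀ ε ×ˢ uIcc a b))
    (hF' : ContinuousOn (uncurry F') (closedBall x₀ ε ×ˢ uIcc a b))
    (hFF' : ∀ x ∈ ball x₀ ε, ∀ t ∈ uIcc a b, HasDerivAt (F · t) (F' x t) x) :
    HasDerivAt (fun x => ∫ t in a..b, F x t) (∫ t in a..b, F' x₀ t) x₀ := by
  have slice : ∀ {G : ℝ → ℝ → E}, ContinuousOn (uncurry G) (closedBall x₀ ε ×ˢ uIcc a b) →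
      ∀ x ∈ closedBall x₀ ε, ContinuousOn (G x) (uIcc a b) := fun hG x hx =>
    hG.comp (Continuous.prodMk_right x).continuousOn fun t ht => ⟨hx, ht⟩
  have hx₀ : x₀ ∈ closedBall x₀ ε := mem_closedBall_self hε.le
  obtain ⟨C, hC⟩ :=
    ((isCompact_closedBall x₀ ε).prod isCompact_uIcc).exists_bound_of_continuousOn hF'
  refine (hasDerivAt_integral_of_dominated_loc_of_deriv_le (bound := fun _ => C)
    (ball_mem_nhds x₀ hε) ?_ (slice hF x₀ hx₀).intervalIntegrable
    (((slice hF' x₀ hx₀).mono uIoc_subset_uIcc).aestronglyMeasurable measurableSet_uIoc)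
    ?_ intervalIntegrable_const ?_).2
  · filter_upwards [ball_mem_nhds x₀ hε] with x hx
    exact ((slice hF x (ball_subset_closedBall hx)).mono uIoc_subset_uIcc).aestronglyMeasurable
      measurableSet_uIoc
  · exact ae_of_all _ fun t ht x hx =>
      hC (x, t) ⟨ball_subset_closedBall hx, uIoc_subset_uIcc ht⟩
  · exact ae_of_all _ fun t ht x hx => hFF' x hx t (uIoc_subset_uIcc ht)

section

variable {n : ℕ} {β : Fin n → ℂ} {c : ℂ} {y : (Fin 2 × Fin n) → ℝ} {t : ℝ}

noncomputable def linFactor (y : (Fin 2 × Fin n) → ℝ) (t : ℝ) (j : Fin n) : ℂ :=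
  (y (0, j) : ℂ) + (y (1, j) : ℂ) * (t : ℂ)

noncomputable def phiIntegrand (β : Fin n → ℂ) (c : ℂ) (y : (Fin 2 × Fin n) → ℝ) (t : ℝ) : ℂ :=
  (t : ℂ) ^ c * ∏ j, linFactor y t j ^ β j

theorem Phi_eq_integral (β : Fin n → ℂ) (δ : ℂ) (a b : ℝ) (y : (Fin 2 × Fin n) → ℝ) :
    Phi β δ a b y = ∫ t in a..b, phiIntegrand β (-δ - 1) y t := rfl

theorem gfun_eq_phiIntegrand (β : Fin n → ℂ) (δ : ℂ) (t : ℝ) (y : (Fin 2 × Fin n) → ℝ) :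
    gfun β δ t y = phiIntegrand β (-δ) y t := rfl

theorem linFactor_mem_slitPlane (hy : ∀ p, 0 < y p) (ht : 0 < t) (j : Fin n) :
    linFactor y t j ∈ slitPlane := by
  have h : linFactor y t j = ((y (0, j) + y (1, j) * t : ℝ) : ℂ) := by
    simp [linFactor]
  rw [h, ofReal_mem_slitPlane]
  have := hy (0, j); have := hy (1, j); positivity

theorem prod_linFactor_cpow_update (y : (Fin 2 × Fin n) → ℝ) (t : ℝ) (i : Fin n) (e : ℂ) :
    ∏ j, linFactor y t j ^ update β i e j
      = linFactor y t i ^ e * ∏ j ∈ Finset.univ.erase i, linFactor y t j ^ β j :=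
  Finset.prod_apply_update (fun j e => linFactor y t j ^ e) β i e

-- `x_{(r,i)}` enters `L_i` with coefficient `t ^ r`, so one formula serves both rows.
theorem linFactor_update (y : (Fin 2 × Fin n) → ℝ) (t : ℝ) (r : Fin 2) (i : Fin n) (s : ℝ) :
    linFactor (update y (r, i) s) t
      = update (linFactor y t) i (linFactor y t i + (s - y (r, i)) * (t : ℂ) ^ (r : ℕ)) := by
  funext j
  rcases eq_or_ne j i with rfl | hji
  · fin_cases r <;> simp [linFactor] <;> ring
  · simp [linFactor, hji]

theorem continuousAt_phiIntegrand (hy : ∀ p, 0 < y p) (ht : 0 < t) :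
    ContinuousAt (fun q : ((Fin 2 × Fin n) → ℝ) × ℝ => phiIntegrand β c q.1 q.2) (y, t) := by
  refine ((continuous_ofReal.comp continuous_snd).continuousAt.cpow continuousAt_const
    (ofReal_mem_slitPlane.2 ht)).mul (tendsto_finsetProd _ fun j _ => ?_)
  exact ContinuousAt.cpow (by unfold linFactor; fun_prop) continuousAt_const
    (linFactor_mem_slitPlane hy ht j)

theorem continuousOn_phiIntegrand {a b : ℝ} (ha : 0 < a) (hb : 0 < b) (hy : ∀ p, 0 < y p) :
    ContinuousOn (phiIntegrand β c y) (uIcc a b) := fun _ ht =>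
  ((continuousAt_phiIntegrand hy ((lt_min ha hb).trans_le ht.1)).comp
    (Continuous.prodMk_right y).continuousAt).continuousWithinAt

theorem intervalIntegrable_phiIntegrand {a b : ℝ} (ha : 0 < a) (hb : 0 < b) (hy : ∀ p, 0 < y p) :
    IntervalIntegrable (phiIntegrand β c y) volume a b :=
  (continuousOn_phiIntegrand ha hb hy).intervalIntegrable

theorem hasDerivAt_phiIntegrand_update (hy : ∀ p, 0 < y p) (ht : 0 < t) (r : Fin 2) (i : Fin n) :
    HasDerivAt (fun s => phiIntegrand β c (update y (r, i) s) t)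
      (β i * phiIntegrand (update β i (β i - 1)) (c + (r : ℕ)) y t) (y (r, i)) := by
  set P := ∏ j ∈ Finset.univ.erase i, linFactor y t j ^ β j
  have hfun : (fun s => phiIntegrand β c (update y (r, i) s) t) = fun s : ℝ =>
      (t : ℂ) ^ c * ((linFactor y t i + (s - y (r, i)) * (t : ℂ) ^ (r : ℕ)) ^ β i * P) := by
    simp only [phiIntegrand, linFactor_update, Finset.prod_apply_update (fun j z => z ^ β j), P]
  have hval : phiIntegrand (update β i (β i - 1)) (c + (r : ℕ)) y t
      = (t : ℂ) ^ c * (t : ℂ) ^ (r : ℕ) * (linFactor y t i ^ (β i - 1) * P) := by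
    rw [phiIntegrand, cpow_add _ _ (ofReal_ne_zero.2 ht.ne'), cpow_natCast,
      prod_linFactor_cpow_update]
  have hL : HasDerivAt (fun s : ℝ => linFactor y t i + (s - y (r, i)) * (t : ℂ) ^ (r : ℕ))
      ((t : ℂ) ^ (r : ℕ)) (y (r, i)) := by
    simpa using (((hasDerivAt_id (y (r, i))).ofReal_comp.sub_const _).mul_const
      ((t : ℂ) ^ (r : ℕ))).const_add (linFactor y t i)
  have hLi := (hasStrictDerivAt_cpow_const (c := β i)
    (linFactor_mem_slitPlane hy ht i)).hasDerivAt.comp_of_eq (y (r, i)) hL (by simp)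
  rw [hfun, hval]
  exact ((hLi.mul_const P).const_mul ((t : ℂ) ^ c)).congr_deriv (by ring)

theorem hasDerivAt_Phi_update {a b : ℝ} (ha : 0 < a) (hb : 0 < b) (hy : ∀ p, 0 < y p) (δ : ℂ)
    (r : Fin 2) (i : Fin n) :
    HasDerivAt (fun s => Phi β δ a b (update y (r, i) s))
      (β i * Phi (update β i (β i - 1)) (δ - (r : ℕ)) a b y) (y (r, i)) := by
  set K := closedBall (y (r, i)) (y (r, i) / 2) ×ˢ uIcc a b
  have hK : ∀ q ∈ K, (∀ p, 0 < update y (r, i) q.1 p) ∧ 0 < q.2 := by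
    rintro ⟨s, t⟩ ⟨hs, ht⟩
    have := (abs_le.1 (Real.dist_eq s _ ▸ mem_closedBall.1 hs)).1
    exact ⟨update_pos hy _ (by linarith [hy (r, i)]), (lt_min ha hb).trans_le ht.1⟩
  have hcont : ∀ (w : ℂ) β' c',
      ContinuousOn (uncurry fun s t => w * phiIntegrand β' c' (update y (r, i) s) t) K :=
    fun w β' c' q hq => (continuousAt_const.mul ((continuousAt_phiIntegrand (hK q hq).1
      (hK q hq).2).comp (f := fun q : ℝ × ℝ => (update y (r, i) q.1, q.2))
        (by fun_prop))).continuousWithinAt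
  have key := intervalIntegral.hasDerivAt_integral_of_continuousOn (half_pos (hy (r, i)))
    (by simpa using hcont 1 β (-δ - 1)) (hcont (β i) _ (-δ - 1 + (r : ℕ))) fun s hs t ht => by
      obtain ⟨hys, ht⟩ := hK (s, t) ⟨ball_subset_closedBall hs, ht⟩
      simpa [update_idem] using hasDerivAt_phiIntegrand_update hys ht r i
  simpa [Phi_eq_integral, intervalIntegral.integral_const_mul,
    show -δ - 1 + (r : ℕ) = -(δ - (r : ℕ)) - 1 by ring] using key

theorem pd_Phi {a b : ℝ} (ha : 0 < a) (hb : 0 < b) (hy : ∀ p, 0 < y p) (δ : ℂ) (r : Fin 2)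
    (i : Fin n) :
    pd (r, i) (Phi β δ a b) y = β i * Phi (update β i (β i - 1)) (δ - (r : ℕ)) a b y :=
  (hasDerivAt_Phi_update ha hb hy δ r i).deriv

theorem pd_pd_Phi {a b : ℝ} (ha : 0 < a) (hb : 0 < b) (hy : ∀ p, 0 < y p) (δ : ℂ) (r : Fin 2)
    {i k : Fin n} (hik : i ≠ k) :
    pd (r, i) (pd (0, k) (Phi β δ a b)) y
      = β k * β i * Phi (update (update β k (β k - 1)) i (β i - 1)) (δ - (r : ℕ)) a b y := by
  have h : ∀ᶠ s in 𝓝 (y (r, i)), pd (0, k) (Phi β δ a b) (update y (r, i) s)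
      = β k * Phi (update β k (β k - 1)) δ a b (update y (r, i) s) := by
    filter_upwards [eventually_gt_nhds (hy (r, i))] with s hs
    simpa using pd_Phi ha hb (update_pos hy _ hs) δ 0 k
  have := ((hasDerivAt_Phi_update (β := update β k (β k - 1)) ha hb hy δ r i).const_mul
    (β k)).congr_of_eventuallyEq h
  rw [pd, this.deriv, update_of_ne hik, mul_assoc]

theorem mul_phiIntegrand_add_mul_phiIntegrand (hy : ∀ p, 0 < y p) (ht : 0 < t) (k : Fin n) :
    (y (0, k) : ℂ) * phiIntegrand (update β k (β k - 1)) c y t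
      + y (1, k) * phiIntegrand (update β k (β k - 1)) (c + 1) y t = phiIntegrand β c y t := by
  have hL := slitPlane_ne_zero (linFactor_mem_slitPlane hy ht k)
  have hpow : linFactor y t k ^ β k = linFactor y t k ^ (β k - 1) * linFactor y t k := by
    rw [cpow_sub _ _ hL, cpow_one, div_mul_cancel₀ _ hL]
  simp only [phiIntegrand, prod_linFactor_cpow_update, cpow_add _ _ (ofReal_ne_zero.2 ht.ne'),
    cpow_one]
  rw [← Finset.mul_prod_erase _ _ (Finset.mem_univ k), hpow, linFactor]
  ring

theorem mul_Phi_add_mul_Phi {a b : ℝ} (ha : 0 < a) (hb : 0 < b) (hy : ∀ p, 0 < y p) (δ : ℂ)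
    (k : Fin n) :
    (y (0, k) : ℂ) * Phi (update β k (β k - 1)) δ a b y
      + y (1, k) * Phi (update β k (β k - 1)) (δ - 1) a b y = Phi β δ a b y := by
  simp only [Phi_eq_integral, show -(δ - 1) - 1 = -δ - 1 + 1 by ring,
    ← intervalIntegral.integral_const_mul]
  rw [← intervalIntegral.integral_add ((intervalIntegrable_phiIntegrand ha hb hy).const_mul _)
    ((intervalIntegrable_phiIntegrand ha hb hy).const_mul _)]
  exact intervalIntegral.integral_congr fun t ht =>
    mul_phiIntegrand_add_mul_phiIntegrand hy ((lt_min ha hb).trans_le ht.1) k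

theorem hasDerivAt_phiIntegrand (hy : ∀ p, 0 < y p) (ht : 0 < t) :
    HasDerivAt (phiIntegrand β c y)
      (c * phiIntegrand β (c - 1) y t
        + ∑ i, β i * y (1, i) * phiIntegrand (update β i (β i - 1)) c y t) t := by
  have hpow : HasDerivAt (fun u : ℝ => (u : ℂ) ^ c) (c * (t : ℂ) ^ (c - 1)) t := by
    simpa using (hasStrictDerivAt_cpow_const (ofReal_mem_slitPlane.2 ht)).hasDerivAt.comp_ofReal
  have hfac : ∀ j, HasDerivAt (fun u => linFactor y u j ^ β j)
      (β j * linFactor y t j ^ (β j - 1) * y (1, j)) t := fun j => by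
    have hL : HasDerivAt (fun u => linFactor y u j) (y (1, j)) t :=
      (((hasDerivAt_id t).ofReal_comp.const_mul (y (1, j) : ℂ)).const_add
        (y (0, j) : ℂ)).congr_deriv (by simp)
    exact (hasStrictDerivAt_cpow_const (linFactor_mem_slitPlane hy ht j)).hasDerivAt.comp t hL
  refine (hpow.mul (HasDerivAt.fun_finsetProd fun j _ => hfac j)).congr_deriv ?_
  simp only [phiIntegrand, prod_linFactor_cpow_update, smul_eq_mul, Finset.mul_sum]
  congr 1
  · ring
  · exact Finset.sum_congr rfl fun i _ => by ring

theorem gfun_sub_gfun {a b : ℝ} (ha : 0 < a) (hb : 0 < b) (hy : ∀ p, 0 < y p) (δ : ℂ) :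
    gfun β δ b y - gfun β δ a y
      = -δ * Phi β δ a b y + ∑ i, β i * y (1, i) * Phi (update β i (β i - 1)) (δ - 1) a b y := by
  have hint : ∀ β' c', IntervalIntegrable (phiIntegrand β' c' y) volume a b :=
    fun _ _ => intervalIntegrable_phiIntegrand ha hb hy
  have hsum : IntervalIntegrable (fun t =>
      ∑ i, β i * y (1, i) * phiIntegrand (update β i (β i - 1)) (-δ) y t) volume a b := by
    simpa only [Finset.sum_fn] using IntervalIntegrable.sum _ fun i _ => (hint _ _).const_mul _
  rw [gfun_eq_phiIntegrand, gfun_eq_phiIntegrand, ← intervalIntegral.integral_eq_sub_of_hasDerivAt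
    (fun t ht => hasDerivAt_phiIntegrand hy ((lt_min ha hb).trans_le ht.1))
    (((hint _ _).const_mul _).add hsum), intervalIntegral.integral_add ((hint _ _).const_mul _) hsum,
    intervalIntegral.integral_finsetSum fun i _ => (hint _ _).const_mul _]
  simp only [intervalIntegral.integral_const_mul, Phi_eq_integral, show -(δ - 1) - 1 = -δ by ring]

end

theorem stmt18_general {n : ℕ} (α : Fin n → ℂ) (δ : ℂ) (a b : ℝ)
    (ha : 0 < a) (hab : a < b)
    (k : Fin n) (x : (Fin 2 × Fin n) → ℝ) (hx : ∀ p, 0 < x p) :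
    ∑ i ∈ Finset.univ \ {k},
        ((x (0, k) * x (1, i) : ℝ) : ℂ)
          * pd (0, i) (pd (0, k) (Phi α (δ - 1) a b)) x
      + (x (1, k) : ℂ) * ∑ i ∈ Finset.univ \ {k},
          (x (1, i) : ℂ) * pd (1, i) (pd (0, k) (Phi α (δ - 1) a b)) x
      + α k * (x (1, k) : ℂ) * pd (0, k) (Phi α (δ - 1) a b) x
      = α k * δ * Phi α δ a b x + α k * (gfun α δ b x - gfun α δ a x) := by
  have hb : 0 < b := ha.trans hab
  have hterm : ∀ i ∈ Finset.univ \ {k},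
      ((x (0, k) * x (1, i) : ℝ) : ℂ) * pd (0, i) (pd (0, k) (Phi α (δ - 1) a b)) x
        + x (1, k) * ((x (1, i) : ℂ) * pd (1, i) (pd (0, k) (Phi α (δ - 1) a b)) x)
        = α k * (α i * x (1, i) * Phi (update α i (α i - 1)) (δ - 1) a b x) := fun i hi => by
    have hik : i ≠ k := by simpa using hi
    have hcontig := mul_Phi_add_mul_Phi (β := update α i (α i - 1)) ha hb hx (δ - 1) k
    rw [update_of_ne hik.symm, update_comm hik] at hcontig
    rw [pd_pd_Phi ha hb hx _ _ hik, pd_pd_Phi ha hb hx _ _ hik, ← hcontig]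
    simp only [Fin.val_zero, Fin.val_one, Nat.cast_zero, Nat.cast_one, sub_zero, ofReal_mul]
    ring
  rw [Finset.mul_sum, ← Finset.sum_add_distrib, Finset.sum_congr rfl hterm, pd_Phi ha hb hx,
    Finset.sdiff_singleton_eq_erase, gfun_sub_gfun ha hb hx]
  simp only [Fin.val_zero, Nat.cast_zero, sub_zero]
  rw [← Finset.mul_sum, ← Finset.sum_erase_add _ _ (Finset.mem_univ k)]
  ring

/-- up shift with respect to `e_{n+1}`: applying
`S₂ = Σ_{i≠k} x_{1k}x_{2i}·∂_{1i} + x_{2k}·(Σ_{i≠k} x_{2i}·∂_{2i}) + α_k·x_{2k}` to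
`x ↦ ∂Φ(α,δ−1;x)/∂x_{1k}` yields `α_k·δ·Φ(α,δ;x) + α_k·[g(t,x)]_{t=a}^{t=b}`. -/
theorem stmt18 {n : ℕ} (hn : 1 ≤ n) (α : Fin n → ℂ) (δ : ℂ) (a b : ℝ)
    (ha : 0 < a) (hab : a < b) (hδ : 0 < (-δ - 1).re) (hα : ∀ k, 1 < (α k).re)
    (k : Fin n) (x : (Fin 2 × Fin n) → ℝ) (hx : ∀ p, 0 < x p) :
    ∑ i ∈ Finset.univ \ {k},
        ((x (0, k) * x (1, i) : ℝ) : ℂ)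
          * pd (0, i) (pd (0, k) (Phi α (δ - 1) a b)) x
      + (x (1, k) : ℂ) * ∑ i ∈ Finset.univ \ {k},
          (x (1, i) : ℂ) * pd (1, i) (pd (0, k) (Phi α (δ - 1) a b)) x
      + α k * (x (1, k) : ℂ) * pd (0, k) (Phi α (δ - 1) a b) x
      = α k * δ * Phi α δ a b x + α k * (gfun α δ b x - gfun α δ a x) :=
  stmt18_general α δ a b ha hab k x hx
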